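/- arXiv:2211.06046 — 5 statements merged into one kernel-verified Lean document; each statement's English description precedes it below -/
import Mathlib

section
/- Let θ1 > 0 and θz ≥ 0, and define the polynomial F(β) = β^6(4θ1θz² + θ1θz³ + 2θ1²θz² + 2θz² + θz³) + β^5(4θ1θz + 4θ1θz² + 2θ1θz³ + 8θ1²θz + 4θ1²θz² + 4θ1³θz) + β^4(2θ1θz + θ1θz² − 11θ1²θz − 8θ1²θz² − 13θ1³θz) + β^3(2θ1² + 2θ1³ + 8θ1²θz + 4θ1²θz² + 16θ1³θz) − β^2(θ1²θz + 5θ1³ + 9θ1³θz) + β(4θ1³ + 2θ1³θz) − θ1³. Then F has at least one root β in the open interval (0, 1). -/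
noncomputable def F (t1 tz b : ℝ) : ℝ :=
  b^6*(4*t1*tz^2 + t1*tz^3 + 2*t1^2*tz^2 + 2*tz^2 + tz^3)
  + b^5*(4*t1*tz + 4*t1*tz^2 + 2*t1*tz^3 + 8*t1^2*tz + 4*t1^2*tz^2 + 4*t1^3*tz)
  + b^4*(2*t1*tz + t1*tz^2 - 11*t1^2*tz - 8*t1^2*tz^2 - 13*t1^3*tz)
  + b^3*(2*t1^2 + 2*t1^3 + 8*t1^2*tz + 4*t1^2*tz^2 + 16*t1^3*tz)
  - b^2*(t1^2*tz + 5*t1^3 + 9*t1^3*tz)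
  + b*(4*t1^3 + 2*t1^3*tz) - t1^3

theorem stmt_0 (t1 tz : ℝ) (h1 : 0 < t1) (hz : 0 ≤ tz) :
    ∃ b ∈ Set.Ioo (0 : ℝ) 1, F t1 tz b = 0 := by
  have hcont : ContinuousOn (fun b => F t1 tz b) (Set.Icc 0 1) := by
    apply Continuous.continuousOn
    unfold F
    continuity
  have h0 : F t1 tz 0 < 0 := by
    simp only [F]
    nlinarith [pow_pos h1 3]
  have hone : 0 < F t1 tz 1 := by
    simp only [F]
    nlinarith [sq_nonneg t1, sq_nonneg tz, mul_pos h1 h1, mul_nonneg hz hz,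
      mul_nonneg (mul_nonneg h1.le hz) hz, mul_nonneg (mul_nonneg hz hz) hz,
      mul_nonneg (mul_nonneg (mul_nonneg h1.le hz) hz) hz,
      mul_nonneg (mul_nonneg (mul_nonneg h1.le h1.le) hz) hz,
      mul_nonneg h1.le hz, mul_nonneg (mul_nonneg h1.le h1.le) hz]
  have := intermediate_value_Ioo (by norm_num : (0:ℝ) ≤ 1) hcont
  have hmem : (0:ℝ) ∈ Set.Ioo (F t1 tz 0) (F t1 tz 1) := ⟨h0, hone⟩
  obtain ⟨b, hb, hfb⟩ := this hmem
  exact ⟨b, hb, hfb⟩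
end

section
/- Let θ1 > 0 and set θz = 0 in the equilibrium polynomial. Then β ∈ (0,1) satisfies the equilibrium equation if and only if 2(1 + θ1)β³ − 5θ1β² + 4θ1β − θ1 = 0, and this cubic has exactly one root in (0, 1), which moreover lies in (0, 1/2). -/
noncomputable def Hcubic (t1 b : ℝ) : ℝ := 2*(1+t1)*b^3 - 5*t1*b^2 + 4*t1*b - t1

lemma Hcubic_pos_of_half_le (t1 : ℝ) (h1 : 0 < t1) {b : ℝ} (hb : 1/2 ≤ b) (hb1 : b < 1) :
    0 < Hcubic t1 b := by
  unfold Hcubic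
  have hb0 : (0:ℝ) < b := by linarith
  nlinarith [mul_nonneg h1.le (mul_nonneg (sq_nonneg (b-1)) (by linarith : (0:ℝ) ≤ 2*b - 1)), pow_pos hb0 3]

lemma Hcubic_mono (t1 : ℝ) (h1 : 0 < t1) {a b : ℝ} (ha : 0 < a) (hab : a < b)
    (hb : b < 1/2) : Hcubic t1 a < Hcubic t1 b := by
  unfold Hcubic
  have hS : (0:ℝ) < (1-2*a)*(2-a-b) + 2*(b-1)^2 := by nlinarith [sq_nonneg (b-1)]
  nlinarith [mul_pos (sub_pos.mpr hab) (mul_pos h1 hS),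
    mul_pos (sub_pos.mpr hab) (show (0:ℝ) < a^2+a*b+b^2 by nlinarith)]

theorem stmt_1 (t1 : ℝ) (h1 : 0 < t1) :
    (∀ b ∈ Set.Ioo (0 : ℝ) 1, F t1 0 b = 0 ↔ Hcubic t1 b = 0) ∧
    (∃! b, b ∈ Set.Ioo (0 : ℝ) 1 ∧ Hcubic t1 b = 0) ∧
    (∀ b ∈ Set.Ioo (0 : ℝ) 1, Hcubic t1 b = 0 → b ∈ Set.Ioo (0 : ℝ) (1/2)) := by
  have ht1 : t1 ≠ 0 := ne_of_gt h1
  have hhalf : ∀ b ∈ Set.Ioo (0 : ℝ) 1, Hcubic t1 b = 0 → b ∈ Set.Ioo (0 : ℝ) (1/2) := by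
    rintro b ⟨hb0, hb1⟩ hroot
    refine ⟨hb0, ?_⟩
    by_contra h
    push_neg at h
    exact (Hcubic_pos_of_half_le t1 h1 h hb1).ne' hroot
  refine ⟨?_, ?_, hhalf⟩
  · intro b _
    have hF : F t1 0 b = t1^2 * Hcubic t1 b := by unfold F Hcubic; ring
    rw [hF]
    constructor
    · intro h
      rcases mul_eq_zero.mp h with h | h
      · exact absurd h (pow_ne_zero 2 ht1)
      · exact h
    · intro h; rw [h, mul_zero]
  · -- existence via IVT
    have hcont : ContinuousOn (Hcubic t1) (Set.Icc (0:ℝ) (1/2)) := by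
      unfold Hcubic; fun_prop
    have h0 : Hcubic t1 0 = -t1 := by unfold Hcubic; ring
    have h12 : Hcubic t1 (1/2) = 1/4 := by unfold Hcubic; ring
    have hmem : (0:ℝ) ∈ Set.Ioo (Hcubic t1 0) (Hcubic t1 (1/2)) := by
      rw [h0, h12]; constructor <;> linarith
    have := intermediate_value_Ioo (by norm_num : (0:ℝ) ≤ 1/2) hcont hmem
    obtain ⟨c, hc, hcz⟩ := this
    refine ⟨c, ⟨⟨hc.1, by linarith [hc.2]⟩, hcz⟩, ?_⟩
    rintro b ⟨hb, hbz⟩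
    have hbh := hhalf b hb hbz
    rcases lt_trichotomy b c with h | h | h
    · exfalso
      have := Hcubic_mono t1 h1 hbh.1 h hc.2
      rw [hbz, hcz] at this; exact lt_irrefl 0 this
    · exact h
    · exfalso
      have := Hcubic_mono t1 h1 hc.1 h hbh.2
      rw [hbz, hcz] at this; exact lt_irrefl 0 this
end

section
/- Let θ1 > 0, θz ≥ 0, β ∈ (0,1), σv > 0, σ2 > 0, and define α = (σ2/σv)·√((θ1 + β²θz(θ1+1)) / (θ1(1−β)² + β²(θz+1))). Then α > σ2/σv if and only if θ1(2β − β² + β²θz) > β². -/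
theorem stmt_3 (t1 tz b sv s2 : ℝ) (h1 : 0 < t1) (hz : 0 ≤ tz)
    (hb : b ∈ Set.Ioo (0 : ℝ) 1) (hsv : 0 < sv) (hs2 : 0 < s2) :
    (s2 / sv) * Real.sqrt ((t1 + b^2*tz*(t1+1)) / (t1*(1-b)^2 + b^2*(tz+1))) > s2 / sv ↔
      t1 * (2*b - b^2 + b^2*tz) > b^2 := by
  obtain ⟨hb0, hb1⟩ := hb
  have hc : 0 < s2 / sv := div_pos hs2 hsv
  have hden : 0 < t1*(1-b)^2 + b^2*(tz+1) := by positivity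
  have key : (s2 / sv) * Real.sqrt ((t1 + b^2*tz*(t1+1)) / (t1*(1-b)^2 + b^2*(tz+1))) > s2 / sv
      ↔ 1 < Real.sqrt ((t1 + b^2*tz*(t1+1)) / (t1*(1-b)^2 + b^2*(tz+1))) := by
    constructor
    · intro h
      by_contra hle
      push_neg at hle
      nlinarith [Real.sqrt_nonneg ((t1 + b^2*tz*(t1+1)) / (t1*(1-b)^2 + b^2*(tz+1)))]
    · intro h; nlinarith
  rw [key, show (1:ℝ) < Real.sqrt ((t1 + b^2*tz*(t1+1)) / (t1*(1-b)^2 + b^2*(tz+1)))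
      ↔ (1:ℝ)^2 < (t1 + b^2*tz*(t1+1)) / (t1*(1-b)^2 + b^2*(tz+1)) from
      Real.lt_sqrt (by norm_num), one_pow, lt_div_iff₀ hden]
  constructor <;> intro h <;> nlinarith
end

section
/- Let θ1 > 0 be fixed and define F(β, θz) as the degree-6 equilibrium polynomial of the front-running model. If for each θz > 0, β(θz) ∈ (0,1) satisfies F(β(θz), θz) = 0, then lim_{θz→∞} β(θz) = 0. -/
theorem stmt_13 (t1 : ℝ) (h1 : 0 < t1) (b : ℝ → ℝ)
    (hb : ∀ tz : ℝ, 0 < tz → b tz ∈ Set.Ioo (0 : ℝ) 1 ∧ F t1 tz (b tz) = 0) :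
    Filter.Tendsto b Filter.atTop (nhds 0) := by
  rw [Metric.tendsto_atTop]
  intro ε hε
  set ε' := min ε 1 with hε'def
  have hε'0 : 0 < ε' := lt_min hε one_pos
  set K := 10*t1 + 14*t1^2 with hKdef
  have hK0 : 0 < K := by positivity
  refine ⟨max 1 (K / ε'^5 + 1), fun tz htz => ?_⟩
  have htz1 : 1 ≤ tz := le_trans (le_max_left _ _) htz
  have htz0 : 0 < tz := lt_of_lt_of_le one_pos htz1
  obtain ⟨⟨hb0, hb1⟩, hF⟩ := hb tz htz0
  set β := b tz with hβ
  have hb4 : β^4 ≤ 1 := pow_le_one₀ hb0.le hb1.le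
  have hb2 : β^2 ≤ 1 := pow_le_one₀ hb0.le hb1.le
  have htzsq : tz ≤ tz^2 := by nlinarith
  have key : β^5 * tz ≤ K := by
    have h2 : 2*t1*(tz^3*β^5) ≤ (20*t1^2+28*t1^3)*tz^2 := by
      unfold F at hF
      have e1 : tz*β^4 ≤ tz^2 := by nlinarith
      have e2 : tz^2*β^4 ≤ tz^2 := by nlinarith
      have e3 : tz*β^2 ≤ tz^2 := by nlinarith
      have e4 : β^2 ≤ tz^2 := by nlinarith
      have e5 : (1:ℝ) ≤ tz^2 := by nlinarith
      have p6 : 0 ≤ β^6*(4*t1*tz^2 + t1*tz^3 + 2*t1^2*tz^2 + 2*tz^2 + tz^3) := by positivity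
      have p5 : 0 ≤ β^5*(4*t1*tz + 4*t1*tz^2 + 8*t1^2*tz + 4*t1^2*tz^2 + 4*t1^3*tz) := by positivity
      have p4 : 0 ≤ β^4*(2*t1*tz + t1*tz^2) := by positivity
      have p3 : 0 ≤ β^3*(2*t1^2 + 2*t1^3 + 8*t1^2*tz + 4*t1^2*tz^2 + 16*t1^3*tz) := by positivity
      have p1 : 0 ≤ β*(4*t1^3 + 2*t1^3*tz) := by positivity
      have m1 : 0 ≤ t1^2*(tz^2 - tz*β^4) := mul_nonneg (sq_nonneg t1) (by linarith)
      have m2 : 0 ≤ t1^2*(tz^2 - tz^2*β^4) := mul_nonneg (sq_nonneg t1) (by linarith)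
      have m3 : 0 ≤ t1^3*(tz^2 - tz*β^4) := mul_nonneg (by positivity) (by linarith)
      have m4 : 0 ≤ t1^2*(tz^2 - tz*β^2) := mul_nonneg (sq_nonneg t1) (by linarith)
      have m5 : 0 ≤ t1^3*(tz^2 - β^2) := mul_nonneg (by positivity) (by linarith)
      have m6 : 0 ≤ t1^3*(tz^2 - tz*β^2) := mul_nonneg (by positivity) (by linarith)
      have m7 : 0 ≤ t1^3*(tz^2 - 1) := mul_nonneg (by positivity) (by linarith)
      linarith [hF, p6, p5, p4, p3, p1, m1, m2, m3, m4, m5, m6, m7]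
    have htz2 : 0 < tz^2 := by positivity
    have h3 : (2*t1*tz^2)*(β^5*tz) ≤ (2*t1*tz^2)*K := by
      rw [hKdef]; linarith [h2]
    exact le_of_mul_le_mul_left h3 (by positivity)
  -- now conclude
  have hlt : β < ε' := by
    by_contra hc
    push_neg at hc
    have h5 : ε'^5 ≤ β^5 := pow_le_pow_left₀ hε'0.le hc 5
    have : ε'^5 * tz ≤ K := le_trans (by nlinarith [hε'0]) key
    have htzle : tz ≤ K / ε'^5 := by
      rw [le_div_iff₀ (by positivity)]
      linarith [this]
    have : K / ε'^5 + 1 ≤ tz := le_trans (le_max_right _ _) htz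
    linarith
  rw [Real.dist_eq, sub_zero, abs_of_pos hb0]
  exact lt_of_lt_of_le hlt (min_le_left _ _)
end

section
/- Fix θz ≥ 0 and for each θ1 > 0 suppose β(θ1) ∈ (0,1) satisfies the degree-6 equilibrium polynomial F(β(θ1); θ1, θz) = 0. Then β(θ1) → 0 as θ1 → 0⁺. -/
lemma key (tz t1 b : ℝ) (hz : 0 ≤ tz) (h0 : 0 < t1) (h1 : t1 ≤ 1)
    (hb0 : 0 < b) (hb1 : b < 1) (hF : F t1 tz b = 0) :
    2*tz^2*b^6 + 2*t1^2*b^3 ≤ t1*tz*(100*(1+tz)^3) + t1^3*(100*(1+tz)^3) := by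
  have hb0' := hb0.le
  have h2 : b^2 ≤ 1 := pow_le_one₀ hb0' hb1.le
  have h4 : b^4 ≤ 1 := pow_le_one₀ hb0' hb1.le
  have ht2 : t1^2 ≤ t1 := by nlinarith
  have ht3 : t1^3 ≤ t1 := by nlinarith
  have hP : 0 ≤ b^6*(4*t1*tz^2 + t1*tz^3 + 2*t1^2*tz^2 + tz^3)
      + b^5*(4*t1*tz + 4*t1*tz^2 + 2*t1*tz^3 + 8*t1^2*tz + 4*t1^2*tz^2 + 4*t1^3*tz)
      + b^4*(2*t1*tz + t1*tz^2)
      + b^3*(2*t1^3 + 8*t1^2*tz + 4*t1^2*tz^2 + 16*t1^3*tz)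
      + b*(4*t1^3 + 2*t1^3*tz) := by positivity
  have hA : b^4*(11*t1^2*tz + 8*t1^2*tz^2 + 13*t1^3*tz)
      ≤ 11*t1^2*tz + 8*t1^2*tz^2 + 13*t1^3*tz :=
    mul_le_of_le_one_left (by positivity) h4
  have hB : b^2*(t1^2*tz + 5*t1^3 + 9*t1^3*tz) ≤ t1^2*tz + 5*t1^3 + 9*t1^3*tz :=
    mul_le_of_le_one_left (by positivity) h2
  have ht2tz : t1^2*tz ≤ t1*tz := mul_le_mul_of_nonneg_right ht2 hz
  have ht3tz : t1^3*tz ≤ t1*tz := mul_le_mul_of_nonneg_right ht3 hz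
  have ht2tz2 : t1^2*tz^2 ≤ t1*tz^2 := mul_le_mul_of_nonneg_right ht2 (by positivity)
  have hN : b^4*(11*t1^2*tz + 8*t1^2*tz^2 + 13*t1^3*tz)
      + b^2*(t1^2*tz + 5*t1^3 + 9*t1^3*tz) + t1^3
      ≤ t1*tz*(100*(1+tz)^3) + t1^3*(100*(1+tz)^3) := by
    nlinarith [mul_nonneg h0.le hz, mul_nonneg (mul_nonneg h0.le hz) hz,
      mul_nonneg (mul_nonneg (mul_nonneg h0.le hz) hz) hz,
      mul_nonneg (pow_nonneg h0.le 3) hz,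
      mul_nonneg (mul_nonneg (pow_nonneg h0.le 3) hz) hz,
      mul_nonneg (mul_nonneg (mul_nonneg (pow_nonneg h0.le 3) hz) hz) hz,
      pow_pos h0 3]
  have hEq : 2*tz^2*b^6 + 2*t1^2*b^3 =
      (b^4*(11*t1^2*tz + 8*t1^2*tz^2 + 13*t1^3*tz)
      + b^2*(t1^2*tz + 5*t1^3 + 9*t1^3*tz) + t1^3)
      - (b^6*(4*t1*tz^2 + t1*tz^3 + 2*t1^2*tz^2 + tz^3)
      + b^5*(4*t1*tz + 4*t1*tz^2 + 2*t1*tz^3 + 8*t1^2*tz + 4*t1^2*tz^2 + 4*t1^3*tz)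
      + b^4*(2*t1*tz + t1*tz^2)
      + b^3*(2*t1^3 + 8*t1^2*tz + 4*t1^2*tz^2 + 16*t1^3*tz)
      + b*(4*t1^3 + 2*t1^3*tz)) := by
    unfold F at hF
    linear_combination hF
  linarith

theorem stmt_14 (tz : ℝ) (hz : 0 ≤ tz) (b : ℝ → ℝ)
    (hb : ∀ t1 : ℝ, 0 < t1 → b t1 ∈ Set.Ioo (0 : ℝ) 1 ∧ F t1 tz (b t1) = 0) :
    Filter.Tendsto b (nhdsWithin 0 (Set.Ioi 0)) (nhds 0) := by
  rw [Metric.tendsto_nhdsWithin_nhds]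
  intro ε hε
  rcases eq_or_lt_of_le hz with htz0 | htzpos
  · -- tz = 0
    have h0z : tz = 0 := htz0.symm
    subst h0z
    refine ⟨min 1 (ε^3/100), by positivity, ?_⟩
    intro t1 ht1 hdist
    rw [Real.dist_eq, sub_zero] at hdist ⊢
    have ht1pos : 0 < t1 := ht1
    have ht1' : t1 < min 1 (ε^3/100) := by rwa [abs_of_pos ht1pos] at hdist
    have ht1le1 : t1 ≤ 1 := le_of_lt (lt_of_lt_of_le ht1' (min_le_left _ _))
    obtain ⟨⟨hb0, hb1⟩, hF0⟩ := hb t1 ht1pos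
    have hk := key 0 t1 (b t1) le_rfl ht1pos ht1le1 hb0 hb1 hF0
    norm_num at hk
    -- hk : 2*t1^2*(b t1)^3 ≤ 100*t1^3 (in some form)
    have hb3 : (b t1)^3 ≤ 50*t1 := by nlinarith [pow_pos ht1pos 2, pow_pos hb0 3]
    have hlt : (b t1)^3 < ε^3 := by
      have h2 : t1 < ε^3/100 := lt_of_lt_of_le ht1' (min_le_right _ _)
      nlinarith
    rw [abs_of_pos hb0]
    by_contra hcon
    push_neg at hcon
    exact absurd hlt (not_lt.mpr (pow_le_pow_left₀ hε.le hcon 3))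
  · -- tz > 0
    set C : ℝ := 100*(1+tz)^3 with hC
    have hCpos : 0 < C := by positivity
    set K : ℝ := C*(tz+1)/(2*tz^2) with hK
    have hKpos : 0 < K := by positivity
    refine ⟨min 1 (ε^6/(2*K)), by positivity, ?_⟩
    intro t1 ht1 hdist
    rw [Real.dist_eq, sub_zero] at hdist ⊢
    have ht1pos : 0 < t1 := ht1
    have ht1' : t1 < min 1 (ε^6/(2*K)) := by rwa [abs_of_pos ht1pos] at hdist
    have ht1le1 : t1 ≤ 1 := le_of_lt (lt_of_lt_of_le ht1' (min_le_left _ _))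
    obtain ⟨⟨hb0, hb1⟩, hF0⟩ := hb t1 ht1pos
    have hk := key tz t1 (b t1) hz ht1pos ht1le1 hb0 hb1 hF0
    rw [← hC] at hk
    have h2tz : (0:ℝ) < 2*tz^2 := by positivity
    have hb6 : (b t1)^6 ≤ t1*K := by
      have ht3le : t1^3 ≤ t1 := by nlinarith
      have h1 : t1^3*C ≤ t1*C := mul_le_mul_of_nonneg_right ht3le hCpos.le
      have h2 : (b t1)^6 * (2*tz^2) ≤ t1*(C*(tz+1)) := by
        nlinarith [mul_nonneg (sq_nonneg t1) (pow_nonneg hb0.le 3)]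
      calc (b t1)^6 = (b t1)^6 * (2*tz^2) / (2*tz^2) := by field_simp
        _ ≤ t1*(C*(tz+1)) / (2*tz^2) := by gcongr
        _ = t1*K := by rw [hK]; ring
    have hlt : (b t1)^6 < ε^6 := by
      have hd : t1 < ε^6/(2*K) := lt_of_lt_of_le ht1' (min_le_right _ _)
      have : t1*K < ε^6/2 := by
        calc t1*K < (ε^6/(2*K))*K := mul_lt_mul_of_pos_right hd hKpos
          _ = ε^6/2 := by field_simp
      nlinarith [pow_pos hε 6]
    rw [abs_of_pos hb0]
    by_contra hcon
    push_neg at hcon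
    exact absurd hlt (not_lt.mpr (pow_le_pow_left₀ hε.le hcon 6))
end
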